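/- Let X be a compact metrizable Cantor space (a compact metrizable space with a countable basis of clopen sets and no isolated points), let G be a countable discrete group, and let θ = (θ_g, X_g)_{g∈G} be a topological partial action of G on X such that every X_g is clopen in X. Then the enveloping space (2^X)_G of the induced partial action 2^θ on the hyperspace 2^X is a locally compact Cantor space, i.e. a locally compact Hausdorff space with a countable basis of clopen sets and no isolated points. -/

import Mathlib

/-- The hyperspace `2^X` of nonempty compact subsets of `X`. -/
structure NCompact (X : Type*) [TopologicalSpace X] where
  carrier : Set X
  isCompact' : IsCompact carrier
  nonempty' : carrier.Nonempty

/-- The Vietoris topology on the hyperspace `2^X`, generated by the subbasic open sets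
`{A | A ⊆ U}` and `{A | A ∩ U ≠ ∅}` for `U` open in `X`. -/
instance NCompact.instTopologicalSpace (X : Type*) [TopologicalSpace X] :
    TopologicalSpace (NCompact X) :=
  TopologicalSpace.generateFrom
    {S | ∃ U : Set X, IsOpen U ∧
      (S = {A : NCompact X | A.carrier ⊆ U} ∨ S = {A : NCompact X | (A.carrier ∩ U).Nonempty})}

/-- A topological partial action `θ = (θ_g, X_g)_{g ∈ G}` of a topological group `G` on a
topological space `X`: a family of open sets `dom g = X_g` and maps `map g = θ_g` which
restrict to homeomorphisms `θ_g : X_{g⁻¹} → X_g` (with inverse `θ_{g⁻¹}`), such that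
`X_1 = X`, `θ_1 = id`, `θ_g(X_{g⁻¹} ∩ X_h) = X_g ∩ X_{gh}` and `θ_g ∘ θ_h = θ_{gh}` on
`X_{h⁻¹} ∩ X_{(gh)⁻¹}`.  (The values of `map g` outside `dom g⁻¹` are irrelevant junk.) -/
structure TopPartialAction (G : Type*) (X : Type*) [Group G] [TopologicalSpace G]
    [TopologicalSpace X] where
  dom : G → Set X
  map : G → X → X
  isOpen_dom : ∀ g, IsOpen (dom g)
  dom_one : dom 1 = Set.univ
  map_one : ∀ x, map 1 x = x
  image_dom : ∀ g, map g '' dom g⁻¹ = dom g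
  map_inv : ∀ g, ∀ x ∈ dom g⁻¹, map g⁻¹ (map g x) = x
  image_inter : ∀ g h, map g '' (dom g⁻¹ ∩ dom h) = dom g ∩ dom (g * h)
  map_mul : ∀ g h, ∀ x ∈ dom h⁻¹ ∩ dom (g * h)⁻¹, map g (map h x) = map (g * h) x
  continuousOn_map : ∀ g, ContinuousOn (map g) (dom g⁻¹)

variable {G X : Type*} [Group G] [TopologicalSpace G] [TopologicalSpace X]

/-- The equivalence relation `R` on `G × X` defining the enveloping space `X_G = (G × X)/R`:
`(g,x) R (h,y)` iff `x ∈ X_{g⁻¹h}` and `θ_{h⁻¹g}(x) = y`. -/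
def envRel (θ : TopPartialAction G X) (p q : G × X) : Prop :=
  p.2 ∈ θ.dom (p.1⁻¹ * q.1) ∧ θ.map (q.1⁻¹ * p.1) p.2 = q.2

/-- The relation `2^R` on `G × 2^X` defining the enveloping space `(2^X)_G` of the induced
partial action `2^θ`: `(g,A) 2^R (h,B)` iff `A ⊆ X_{g⁻¹h}` and `θ_{h⁻¹g}(A) = B`. -/
def envRelH (θ : TopPartialAction G X) (p q : G × NCompact X) : Prop :=
  p.2.carrier ⊆ θ.dom (p.1⁻¹ * q.1) ∧ θ.map (q.1⁻¹ * p.1) '' p.2.carrier = q.2.carrier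

/-!
The quotient map `G × 2^X → (2^X)_G` is open, and injective on each slice `{g} × 2^X`, so the
enveloping space is covered by open copies of the hyperspace.  The hyperspace is Mathlib's
`NonemptyCompacts X` with the Vietoris topology: it is compact Hausdorff, the Vietoris sets built
from a countable clopen basis of `X` form a countable clopen basis, and it has no isolated points.
Local compactness, the clopen basis and perfectness pass to `(2^X)_G` through the slices.  For
Hausdorffness, two classes `[g, A]` and `[h, B]` either lie in a common slice, or `A ⊄ X_{g⁻¹h}`
and the open slice of `{A' | A' ⊄ X_{g⁻¹h}}` over `g` is disjoint from the slice over `h`: this is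
where the closedness of the domains `X_g` enters.
-/

open Set Topology TopologicalSpace

def HasCountableClopenBasis (Y : Type*) [TopologicalSpace Y] : Prop :=
  ∃ B : Set (Set Y), B.Countable ∧ (∀ U ∈ B, IsClopen U) ∧ IsTopologicalBasis B

theorem Homeomorph.hasCountableClopenBasis {Y Z : Type*} [TopologicalSpace Y] [TopologicalSpace Z]
    (e : Y ≃ₜ Z) (h : HasCountableClopenBasis Y) : HasCountableClopenBasis Z := by
  obtain ⟨B, hBc, hBclopen, hB⟩ := h
  refine ⟨preimage e.symm '' B, hBc.image _, ?_, hB.isInducing e.symm.isInducing⟩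
  rintro _ ⟨U, hU, rfl⟩
  exact (hBclopen U hU).preimage e.symm.continuous

namespace TopPartialAction

variable (θ : TopPartialAction G X)

theorem map_mem_dom {g : G} {x : X} (hx : x ∈ θ.dom g⁻¹) : θ.map g x ∈ θ.dom g :=
  θ.image_dom g ▸ mem_image_of_mem _ hx

theorem map_map_inv {g : G} {x : X} (hx : x ∈ θ.dom g) : θ.map g (θ.map g⁻¹ x) = x := by
  simpa using θ.map_inv g⁻¹ x (by simpa using hx)

theorem image_inter_dom_inv (g : G) (U : Set X) :
    θ.map g '' (U ∩ θ.dom g⁻¹) = θ.dom g ∩ θ.map g⁻¹ ⁻¹' U := by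
  ext y
  constructor
  · rintro ⟨x, ⟨hxU, hx⟩, rfl⟩
    exact ⟨θ.map_mem_dom hx, by rwa [mem_preimage, θ.map_inv g x hx]⟩
  · rintro ⟨hy, hyU⟩
    refine ⟨θ.map g⁻¹ y, ⟨hyU, ?_⟩, θ.map_map_inv hy⟩
    simpa using θ.map_mem_dom (g := g⁻¹) (by simpa using hy)

theorem isOpen_image_inter_dom_inv (g : G) {U : Set X} (hU : IsOpen U) :
    IsOpen (θ.map g '' (U ∩ θ.dom g⁻¹)) := by
  rw [image_inter_dom_inv]
  simpa using (θ.continuousOn_map g⁻¹).isOpen_inter_preimage (θ.isOpen_dom _) hU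

theorem mem_dom_mul {a b : G} {x : X} (hxa : x ∈ θ.dom a) (hy : θ.map a⁻¹ x ∈ θ.dom b) :
    x ∈ θ.dom (a * b) ∧ θ.map b⁻¹ (θ.map a⁻¹ x) = θ.map (a * b)⁻¹ x := by
  have hxab : x ∈ θ.dom (a * b) := by
    have hy' : θ.map a⁻¹ x ∈ θ.dom a⁻¹ ∩ θ.dom b := ⟨θ.map_mem_dom (by simpa using hxa), hy⟩
    have := θ.image_inter a b ▸ mem_image_of_mem (θ.map a) hy'
    rw [θ.map_map_inv hxa] at this
    exact this.2
  refine ⟨hxab, ?_⟩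
  rw [θ.map_mul b⁻¹ a⁻¹ x ⟨by simpa using hxa, by simpa using hxab⟩, mul_inv_rev]

end TopPartialAction

theorem envRel_equivalence (θ : TopPartialAction G X) : Equivalence (envRel θ) where
  refl p := by simp [envRel, θ.dom_one, θ.map_one]
  symm := by
    rintro ⟨g, x⟩ ⟨h, _⟩ ⟨hx : x ∈ θ.dom (g⁻¹ * h), rfl : θ.map (h⁻¹ * g) x = _⟩
    have hx' : x ∈ θ.dom (h⁻¹ * g)⁻¹ := by simpa using hx
    exact ⟨by simpa using θ.map_mem_dom hx', by simpa using θ.map_inv _ x hx'⟩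
  trans := by
    rintro ⟨g, x⟩ ⟨h, _⟩ ⟨k, _⟩ ⟨hx : x ∈ θ.dom (g⁻¹ * h), rfl : θ.map (h⁻¹ * g) x = _⟩
      ⟨hy, rfl : θ.map (k⁻¹ * h) _ = _⟩
    have key := θ.mem_dom_mul hx (by simpa using hy)
    simp only [mul_assoc, mul_inv_cancel_left, mul_inv_rev, inv_inv] at key
    exact ⟨key.1, key.2.symm⟩

theorem envRel_mk_eq_mk_iff (θ : TopPartialAction G X) {p q : G × X} :
    Quot.mk (envRel θ) p = Quot.mk (envRel θ) q ↔ envRel θ p q :=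
  (envRel_equivalence θ).quot_mk_eq_iff p q

theorem envRel_same_fst_iff (θ : TopPartialAction G X) {g : G} {x y : X} :
    envRel θ (g, x) (g, y) ↔ x = y := by
  simp [envRel, θ.dom_one, θ.map_one]

theorem envRel_mk_slice_injective (θ : TopPartialAction G X) (g : G) :
    Function.Injective fun x => Quot.mk (envRel θ) (g, x) :=
  fun _ _ h => (envRel_same_fst_iff θ).1 ((envRel_mk_eq_mk_iff θ).1 h)

theorem not_isOpen_singleton_envelope (θ : TopPartialAction G X)
    (hX : ∀ x : X, ¬ IsOpen ({x} : Set X)) (y : Quot (envRel θ)) :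
    ¬ IsOpen ({y} : Set (Quot (envRel θ))) := by
  obtain ⟨⟨g, x⟩, rfl⟩ := Quot.mk_surjective y
  intro hy
  refine hX x ?_
  rw [← (envRel_mk_slice_injective θ g).preimage_image {x}, image_singleton]
  exact hy.preimage (continuous_quot_mk.comp (Continuous.prodMk_right g))

section Envelope

variable (θ : TopPartialAction G X) [DiscreteTopology G]

theorem isOpenQuotientMap_envRel_mk : IsOpenQuotientMap (Quot.mk (envRel θ)) := by
  refine ⟨Quot.mk_surjective, continuous_quot_mk, ?_⟩
  refine ((isTopologicalBasis_singletons G).prod isTopologicalBasis_opens).isOpenMap_iff.2 ?_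
  rintro _ ⟨_, ⟨g, rfl⟩, U, hU : IsOpen U, rfl⟩
  rw [← isQuotientMap_quot_mk.isOpen_preimage]
  have hsat : Quot.mk (envRel θ) ⁻¹' (Quot.mk (envRel θ) '' ({g} ×ˢ U)) =
      ⋃ h : G, {h} ×ˢ (θ.map (h⁻¹ * g) '' (U ∩ θ.dom (h⁻¹ * g)⁻¹)) := by
    ext ⟨h, y⟩
    simp [envRel_mk_eq_mk_iff, envRel, eq_comm, and_assoc]
  rw [hsat]
  exact isOpen_iUnion fun h => (isOpen_discrete _).prod (θ.isOpen_image_inter_dom_inv _ hU)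

theorem isOpenMap_envRel_mk_slice (g : G) : IsOpenMap fun x => Quot.mk (envRel θ) (g, x) :=
  (isOpenQuotientMap_envRel_mk θ).isOpenMap.comp fun U hU => by
    simpa only [← singleton_prod] using (isOpen_discrete _).prod hU

theorem t2Space_envelope [T2Space X] (hclosed : ∀ g, IsClosed (θ.dom g)) :
    T2Space (Quot (envRel θ)) := by
  refine ⟨?_⟩
  rintro ⟨g, x⟩ ⟨h, y⟩ hne
  by_cases hx : x ∈ θ.dom (g⁻¹ * h)
  · have hgx : Quot.mk (envRel θ) (g, x) = Quot.mk _ (h, θ.map (h⁻¹ * g) x) := Quot.sound ⟨hx, rfl⟩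
    rw [hgx] at hne ⊢
    have hxy : θ.map (h⁻¹ * g) x ≠ y := fun hxy => hne (by rw [hxy])
    obtain ⟨u, v, hu, hv, hxu, hyv, huv⟩ := t2_separation hxy
    exact ⟨_, _, isOpenMap_envRel_mk_slice θ h u hu, isOpenMap_envRel_mk_slice θ h v hv,
      mem_image_of_mem _ hxu, mem_image_of_mem _ hyv,
      (disjoint_image_iff (envRel_mk_slice_injective θ h)).2 huv⟩
  · refine ⟨_, _, isOpenMap_envRel_mk_slice θ g _ (hclosed (g⁻¹ * h)).isOpen_compl,
      isOpenMap_envRel_mk_slice θ h _ isOpen_univ, mem_image_of_mem _ hx,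
      mem_image_of_mem _ (mem_univ y), ?_⟩
    rw [disjoint_left]
    rintro _ ⟨x', hx', rfl⟩ ⟨y', -, hy'⟩
    exact hx' ((envRel_mk_eq_mk_iff θ).1 hy'.symm).1

theorem hasCountableClopenBasis_envelope [Countable G] [CompactSpace X]
    [T2Space (Quot (envRel θ))] (hX : HasCountableClopenBasis X) :
    HasCountableClopenBasis (Quot (envRel θ)) := by
  obtain ⟨B, hBc, hBclopen, hB⟩ := hX
  have hq := isOpenQuotientMap_envRel_mk θ
  have hsingletons : {s : Set G | ∃ g, s = {g}}.Countable :=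
    (countable_range singleton).mono <| by rintro _ ⟨g, rfl⟩; exact ⟨g, rfl⟩
  refine ⟨image (Quot.mk _) '' image2 (· ×ˢ ·) {s | ∃ g : G, s = {g}} B,
    (hsingletons.image2 hBc _).image _, ?_,
    ((isTopologicalBasis_singletons G).prod hB).isQuotientMap hq.isQuotientMap hq.isOpenMap⟩
  · rintro _ ⟨_, ⟨_, ⟨g, rfl⟩, U, hU, rfl⟩, rfl⟩
    refine ⟨?_, hq.isOpenMap _ ((isOpen_discrete _).prod (hBclopen U hU).isOpen)⟩
    exact ((isCompact_singleton.prod (hBclopen U hU).isClosed.isCompact).image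
      hq.continuous).isClosed

end Envelope

namespace TopologicalSpace.NonemptyCompacts

theorem hasCountableClopenBasis (hX : HasCountableClopenBasis X) :
    HasCountableClopenBasis (NonemptyCompacts X) := by
  obtain ⟨B, hBc, hBclopen, hB⟩ := hX
  have hfin : {u | u.Finite ∧ u.Nonempty ∧ u ⊆ B}.Countable :=
    (countable_ofPred_finite_subset hBc).mono fun _ hu => And.intro hu.1 hu.2.2
  refine ⟨_, hfin.image _, ?_, hB.nonemptyCompacts⟩
  rintro _ ⟨u, ⟨hu, -, huB⟩, rfl⟩
  simp_rw [ofPred_and, ofPred_forall]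
  refine .inter ⟨isClosed_subsets_of_isClosed ?_, isOpen_subsets_of_isOpen ?_⟩
    (hu.isClopen_biInter fun U hU => ⟨isClosed_inter_nonempty_of_isClosed (hBclopen U (huB hU)).1,
      isOpen_inter_nonempty_of_isOpen (hBclopen U (huB hU)).2⟩)
  · rw [sUnion_eq_biUnion]
    exact (hu.isClopen_biUnion fun U hU => hBclopen U (huB hU)).1
  · exact isOpen_sUnion fun U hU => (hBclopen U (huB hU)).2

/-- An isolated `K` must be finite, by density of the finite sets; then `x ↦ K ∪ {x}` shows that
`K` is open in `X`, and a finite open set contains an isolated point. -/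
theorem not_isOpen_singleton [T1Space X] (hX : ∀ x : X, ¬ IsOpen ({x} : Set X))
    (K : NonemptyCompacts X) : ¬ IsOpen ({K} : Set (NonemptyCompacts X)) := by
  intro hK
  have hfin : (K : Set X).Finite := by
    obtain ⟨L, rfl, hL⟩ := dense_setOfPred_finite.inter_open_nonempty _ hK (singleton_nonempty K)
    exact hL
  have hopen : IsOpen (K : Set X) := by
    have hcont : Continuous fun x : X => K ⊔ {x} := continuous_const.sup continuous_singleton
    convert hK.preimage hcont using 1
    ext x
    simp [← SetLike.coe_set_eq]
  obtain ⟨x, hx⟩ := K.nonempty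
  exact hX x (isOpen_singleton_of_finite_mem_nhds x (hopen.mem_nhds hx) hfin)

end TopologicalSpace.NonemptyCompacts

namespace NCompact

theorem carrier_injective : Function.Injective (carrier : NCompact X → Set X) := by
  rintro ⟨A, _, _⟩ ⟨B, _, _⟩ (rfl : A = B)
  rfl

theorem isOpen_setOf_carrier_subset {U : Set X} (hU : IsOpen U) :
    IsOpen {A : NCompact X | A.carrier ⊆ U} :=
  isOpen_generateFrom_of_mem ⟨U, hU, Or.inl rfl⟩

theorem isOpen_setOf_carrier_inter_nonempty {U : Set X} (hU : IsOpen U) :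
    IsOpen {A : NCompact X | (A.carrier ∩ U).Nonempty} :=
  isOpen_generateFrom_of_mem ⟨U, hU, Or.inr rfl⟩

attribute [local instance] TopologicalSpace.vietoris in
variable (X) in
def homeomorphNonemptyCompacts : NCompact X ≃ₜ NonemptyCompacts X where
  toFun A := ⟨⟨A.carrier, A.isCompact'⟩, A.nonempty'⟩
  invFun K := ⟨K, K.isCompact, K.nonempty⟩
  left_inv _ := rfl
  right_inv _ := rfl
  continuous_toFun := by
    refine NonemptyCompacts.isEmbedding_coe.continuous_iff.2 (continuous_generateFrom_iff.2 ?_)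
    rintro _ (⟨U, hU, rfl⟩ | ⟨U, hU, rfl⟩)
    · exact isOpen_setOf_carrier_subset hU
    · exact isOpen_setOf_carrier_inter_nonempty hU
  continuous_invFun := by
    refine continuous_generateFrom_iff.2 ?_
    rintro _ ⟨U, hU, rfl | rfl⟩
    · exact NonemptyCompacts.isOpen_subsets_of_isOpen hU
    · exact NonemptyCompacts.isOpen_inter_nonempty_of_isOpen hU

theorem isClosed_setOf_carrier_subset {F : Set X} (hF : IsClosed F) :
    IsClosed {A : NCompact X | A.carrier ⊆ F} :=
  (NonemptyCompacts.isClosed_subsets_of_isClosed hF).preimage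
    (homeomorphNonemptyCompacts X).continuous

instance [T2Space X] : T2Space (NCompact X) :=
  (homeomorphNonemptyCompacts X).isEmbedding.t2Space

instance [CompactSpace X] : CompactSpace (NCompact X) :=
  (homeomorphNonemptyCompacts X).symm.compactSpace

theorem hasCountableClopenBasis (hX : HasCountableClopenBasis X) :
    HasCountableClopenBasis (NCompact X) :=
  (homeomorphNonemptyCompacts X).symm.hasCountableClopenBasis
    (NonemptyCompacts.hasCountableClopenBasis hX)

theorem not_isOpen_singleton [T1Space X] (hX : ∀ x : X, ¬ IsOpen ({x} : Set X)) (A : NCompact X) :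
    ¬ IsOpen ({A} : Set (NCompact X)) := fun hA =>
  NonemptyCompacts.not_isOpen_singleton hX _
    (image_singleton ▸ (homeomorphNonemptyCompacts X).isOpenMap _ hA)

end NCompact

namespace TopPartialAction

variable (θ : TopPartialAction G X)

open Classical in
noncomputable def hmap (g : G) (A : NCompact X) : NCompact X :=
  if h : A.carrier ⊆ θ.dom g⁻¹ then
    ⟨θ.map g '' A.carrier, A.isCompact'.image_of_continuousOn ((θ.continuousOn_map g).mono h),
      A.nonempty'.image _⟩
  else A

theorem hmap_carrier {g : G} {A : NCompact X} (h : A.carrier ⊆ θ.dom g⁻¹) :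
    (θ.hmap g A).carrier = θ.map g '' A.carrier := by
  rw [hmap, dif_pos h]

theorem hmap_one (A : NCompact X) : θ.hmap 1 A = A :=
  NCompact.carrier_injective <| by
    rw [θ.hmap_carrier (by simp [θ.dom_one])]
    simp [θ.map_one]

theorem hmap_inv_hmap {g : G} {A : NCompact X} (h : A.carrier ⊆ θ.dom g⁻¹) :
    θ.hmap g⁻¹ (θ.hmap g A) = A := by
  have h' : (θ.hmap g A).carrier ⊆ θ.dom g⁻¹⁻¹ := by
    rw [inv_inv, θ.hmap_carrier h, ← θ.image_dom g]
    exact image_mono h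
  refine NCompact.carrier_injective ?_
  rw [θ.hmap_carrier h', θ.hmap_carrier h, image_image]
  exact (image_congr fun x hx => θ.map_inv g x (h hx)).trans (image_id _)

theorem image_hmap_setOf_subset {g : G} {S : Set X} (hS : S ⊆ θ.dom g⁻¹) :
    θ.hmap g '' {A | A.carrier ⊆ S} = {B | B.carrier ⊆ θ.map g '' S} := by
  ext B
  constructor
  · rintro ⟨A, hA, rfl⟩
    change (θ.hmap g A).carrier ⊆ _
    rw [θ.hmap_carrier (hA.trans hS)]
    exact image_mono hA
  · intro hB
    have hBdom : B.carrier ⊆ θ.dom g⁻¹⁻¹ := by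
      rw [inv_inv, ← θ.image_dom g]
      exact hB.trans (image_mono hS)
    refine ⟨θ.hmap g⁻¹ B, ?_, by simpa using θ.hmap_inv_hmap hBdom⟩
    rw [mem_ofPred_eq, θ.hmap_carrier hBdom]
    rintro _ ⟨y, hy, rfl⟩
    obtain ⟨x, hx, rfl⟩ := hB hy
    rwa [θ.map_inv g x (hS hx)]

theorem continuousOn_hmap (g : G) :
    ContinuousOn (θ.hmap g) {A | A.carrier ⊆ θ.dom g⁻¹} := by
  rw [continuousOn_iff_continuous_domRestrict]
  refine continuous_generateFrom_iff.2 ?_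
  rintro _ ⟨U, hU, rfl | rfl⟩
  all_goals
    have hV := (θ.continuousOn_map g).isOpen_inter_preimage (θ.isOpen_dom g⁻¹) hU
  · refine isOpen_induced_iff.2 ⟨_, NCompact.isOpen_setOf_carrier_subset hV, ?_⟩
    ext ⟨A, hA⟩
    have hA : A.carrier ⊆ θ.dom g⁻¹ := hA
    simp [θ.hmap_carrier hA, subset_inter_iff, hA]
  · refine isOpen_induced_iff.2 ⟨_, NCompact.isOpen_setOf_carrier_inter_nonempty hV, ?_⟩
    ext ⟨A, hA⟩
    have hA : A.carrier ⊆ θ.dom g⁻¹ := hA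
    simp [θ.hmap_carrier hA, ← inter_assoc, inter_eq_left.2 hA]

/-- The induced partial action `2^θ`. -/
noncomputable def hyperspace : TopPartialAction G (NCompact X) where
  dom g := {A | A.carrier ⊆ θ.dom g}
  map := θ.hmap
  isOpen_dom g := NCompact.isOpen_setOf_carrier_subset (θ.isOpen_dom g)
  dom_one := by simp [θ.dom_one]
  map_one := θ.hmap_one
  image_dom g := by rw [θ.image_hmap_setOf_subset subset_rfl, θ.image_dom]
  map_inv g _ := θ.hmap_inv_hmap
  image_inter g h := by
    simp only [← ofPred_and, ← subset_inter_iff]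
    rw [θ.image_hmap_setOf_subset inter_subset_left, θ.image_inter]
  map_mul g h A hA := by
    have hA' : A.carrier ⊆ θ.dom h⁻¹ ∩ θ.dom (g * h)⁻¹ := subset_inter_iff.2 hA
    have hhA : (θ.hmap h A).carrier ⊆ θ.dom g⁻¹ := by
      rw [θ.hmap_carrier (hA'.trans inter_subset_left)]
      refine (image_mono hA').trans ?_
      rw [θ.image_inter]
      simp
    refine NCompact.carrier_injective ?_
    rw [θ.hmap_carrier hhA, θ.hmap_carrier (hA'.trans inter_subset_left),
      θ.hmap_carrier (hA'.trans inter_subset_right), image_image]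
    exact image_congr fun x hx => θ.map_mul g h x (hA' hx)
  continuousOn_map := θ.continuousOn_hmap

theorem envRelH_eq_envRel_hyperspace : envRelH θ = envRel θ.hyperspace := by
  ext ⟨g, A⟩ ⟨h, B⟩
  refine and_congr_right fun hA => ?_
  change _ ↔ θ.hmap _ A = B
  rw [← NCompact.carrier_injective.eq_iff, θ.hmap_carrier (by simpa using hA)]

end TopPartialAction

theorem envelopingSpace_hyperspace_locallyCompactCantor_general
    {G X : Type*} [Group G] [TopologicalSpace G]
    [Countable G] [DiscreteTopology G]
    [TopologicalSpace X] [CompactSpace X] [TopologicalSpace.MetrizableSpace X]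
    (hXbasis : ∃ B : Set (Set X), B.Countable ∧ (∀ U ∈ B, IsClopen U) ∧
      TopologicalSpace.IsTopologicalBasis B)
    (hXperfect : ∀ x : X, ¬ IsOpen ({x} : Set X))
    (θ : TopPartialAction G X)
    (hclopen : ∀ g, IsClopen (θ.dom g)) :
    LocallyCompactSpace (Quot (envRelH θ)) ∧ T2Space (Quot (envRelH θ)) ∧
      (∃ B : Set (Set (Quot (envRelH θ))), B.Countable ∧ (∀ U ∈ B, IsClopen U) ∧
        TopologicalSpace.IsTopologicalBasis B) ∧
      ∀ y : Quot (envRelH θ), ¬ IsOpen ({y} : Set (Quot (envRelH θ))) := by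
  have hclosed (g : G) : IsClosed (θ.hyperspace.dom g) :=
    NCompact.isClosed_setOf_carrier_subset (hclopen g).isClosed
  rw [θ.envRelH_eq_envRel_hyperspace]
  have := t2Space_envelope θ.hyperspace hclosed
  exact ⟨(isOpenQuotientMap_envRel_mk θ.hyperspace).locallyCompactSpace, this,
    hasCountableClopenBasis_envelope θ.hyperspace (NCompact.hasCountableClopenBasis hXbasis),
    not_isOpen_singleton_envelope θ.hyperspace (NCompact.not_isOpen_singleton hXperfect)⟩

/-- Let `X` be a compact metrizable Cantor space (compact, metrizable, with a countable basis
of clopen sets and no isolated points), let `G` be a countable discrete group, and let `θ` be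
a topological partial action of `G` on `X` with every `X_g` clopen.  Then the enveloping
space `(2^X)_G` of the induced partial action on the hyperspace `2^X` is a locally compact
Cantor space: locally compact, Hausdorff, with a countable basis of clopen sets and no
isolated points. -/
theorem envelopingSpace_hyperspace_locallyCompactCantor
    {G X : Type*} [Group G] [TopologicalSpace G] [IsTopologicalGroup G]
    [Countable G] [DiscreteTopology G]
    [TopologicalSpace X] [CompactSpace X] [TopologicalSpace.MetrizableSpace X]
    (hXbasis : ∃ B : Set (Set X), B.Countable ∧ (∀ U ∈ B, IsClopen U) ∧
      TopologicalSpace.IsTopologicalBasis B)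
    (hXperfect : ∀ x : X, ¬ IsOpen ({x} : Set X))
    (θ : TopPartialAction G X)
    (hclopen : ∀ g, IsClopen (θ.dom g)) :
    LocallyCompactSpace (Quot (envRelH θ)) ∧ T2Space (Quot (envRelH θ)) ∧
      (∃ B : Set (Set (Quot (envRelH θ))), B.Countable ∧ (∀ U ∈ B, IsClopen U) ∧
        TopologicalSpace.IsTopologicalBasis B) ∧
      ∀ y : Quot (envRelH θ), ¬ IsOpen ({y} : Set (Quot (envRelH θ))) :=
  envelopingSpace_hyperspace_locallyCompactCantor_general hXbasis hXperfect θ hclopen
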